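/- arXiv:2504.09919 — 3 statements merged into one kernel-verified Lean document; each statement's English description precedes it below -/
import Mathlib

section
/- Let F be a unitary N=(2,2) full vertex operator superalgebra and v ∈ F_{h,h̄}^α nonzero. Then v is a chiral-chiral primary vector (i.e., a lowest weight vector annihilated by G_{-1/2}^+ and Ḡ_{-1/2}^+) if and only if h = (α,J)_l/2 and h̄ = (α,J̄)_r/2. -/
/-!
Let `v` have weights `h, jl`. The anticommutator `{G⁺_{-1/2}, G⁻_{1/2}} = L₀ - J₀/2` acts on `v`
as `h - jl/2`. If `v` is chiral primary this gives `h = jl/2` at once. Conversely, if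
`h = jl/2`, unitarity turns `⟪{G⁺_{-1/2}, G⁻_{1/2}} v, v⟫ = 0` into
`‖G⁻_{1/2} v‖² + ‖G⁺_{-1/2} v‖² = 0`, and every other lowering mode maps `v` to a weight vector
violating `h' ≥ jl'/2`, hence to `0`. The antichiral half is the same argument.
-/

open scoped ComplexInnerProductSpace InnerProductSpace

theorem LinearMap.apply_apply_eq_add_smul_of_comp_sub_comp_eq {R M : Type*} [CommRing R]
    [AddCommGroup M] [Module R M] {A X : M →ₗ[R] M} {a s : R} {v : M}
    (hc : A ∘ₗ X - X ∘ₗ A = s • X) (hv : A v = a • v) : A (X v) = (a + s) • X v := by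
  have hcv := LinearMap.congr_fun hc v
  simp only [LinearMap.sub_apply, LinearMap.comp_apply, LinearMap.smul_apply, hv,
    map_smul] at hcv
  rw [add_smul, ← hcv]
  abel

theorem LinearMap.apply_apply_eq_smul_of_commute {R M : Type*} [CommRing R]
    [AddCommGroup M] [Module R M] {A X : M →ₗ[R] M} {a : R} {v : M}
    (hc : Commute A X) (hv : A v = a • v) : A (X v) = a • X v := by
  rw [← Module.End.mul_apply, hc.eq, Module.End.mul_apply, hv, map_smul]

theorem LinearMap.apply_eq_zero_and_apply_eq_zero_of_anticomm {𝕜 E : Type*} [RCLike 𝕜]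
    [NormedAddCommGroup E] [InnerProductSpace 𝕜 E] {A B : E →ₗ[𝕜] E}
    (hAB : ∀ u w, ⟪u, A w⟫_𝕜 = ⟪B u, w⟫_𝕜) {v : E} (hv : B (A v) + A (B v) = 0) :
    A v = 0 ∧ B v = 0 := by
  have hBA : ∀ u w, ⟪u, B w⟫_𝕜 = ⟪A u, w⟫_𝕜 := fun u w => by
    rw [← inner_conj_symm, ← hAB, inner_conj_symm]
  have hsum : ((‖A v‖ ^ 2 + ‖B v‖ ^ 2 : ℝ) : 𝕜) = 0 := by
    rw [RCLike.ofReal_add, RCLike.ofReal_pow, RCLike.ofReal_pow, ← inner_self_eq_norm_sq_to_K,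
      ← inner_self_eq_norm_sq_to_K, hAB, hBA, ← inner_add_left, hv, inner_zero_left]
  obtain ⟨hAv, hBv⟩ :=
    (add_eq_zero_iff_of_nonneg (sq_nonneg _) (sq_nonneg _)).1 (RCLike.ofReal_eq_zero.1 hsum)
  exact ⟨by simpa using hAv, by simpa using hBv⟩

section ChiralHalf

variable {F : Type*} [NormedAddCommGroup F] [InnerProductSpace ℂ F]

theorem anticomm_half_apply_eq_smul (c : ℝ) {L J Gp Gm : ℝ → F →ₗ[ℂ] F}
    (brk : ∀ r s : ℝ, Gp r ∘ₗ Gm s + Gm s ∘ₗ Gp r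
        = L (r + s) + (((r - s) / 2 : ℝ) : ℂ) • J (r + s)
          + (if r + s = 0 then ((c / 6 * (r ^ 2 - 1 / 4) : ℝ) : ℂ) else 0)
              • (LinearMap.id : F →ₗ[ℂ] F))
    {v : F} {h jl : ℝ} (hL0 : L 0 v = (h : ℂ) • v) (hJ0 : J 0 v = (jl : ℂ) • v) :
    Gp (-(1 / 2)) (Gm (1 / 2) v) + Gm (1 / 2) (Gp (-(1 / 2)) v) = ((h - jl / 2 : ℝ) : ℂ) • v := by
  have hbrk := LinearMap.congr_fun (brk (-(1 / 2)) (1 / 2)) v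
  simp only [LinearMap.add_apply, LinearMap.comp_apply, LinearMap.smul_apply,
    LinearMap.id_apply] at hbrk
  -- the central term `c/6 (r² - 1/4)` vanishes at `r = -1/2`
  norm_num at hbrk
  rw [hbrk, hL0, hJ0]
  push_cast
  module

theorem eq_zero_of_weight_lt {L0 J0 A B X : F →ₗ[ℂ] F} {a b : ℂ}
    (hbound : ∀ (w : F) (h' jl' : ℝ), w ≠ 0 → L0 w = (h' : ℂ) • w → J0 w = (jl' : ℂ) • w →
      A w = a • w → B w = b • w → jl' / 2 ≤ h')
    {s q : ℝ} (hL : L0 ∘ₗ X - X ∘ₗ L0 = (s : ℂ) • X) (hJ : J0 ∘ₗ X - X ∘ₗ J0 = (q : ℂ) • X)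
    (hA : Commute A X) (hB : Commute B X)
    {v : F} {h jl : ℝ} (hL0 : L0 v = (h : ℂ) • v) (hJ0 : J0 v = (jl : ℂ) • v)
    (hAv : A v = a • v) (hBv : B v = b • v) (hlt : h + s < (jl + q) / 2) : X v = 0 := by
  by_contra hXv
  have hge := hbound (X v) (h + s) (jl + q) hXv
    (by exact_mod_cast LinearMap.apply_apply_eq_add_smul_of_comp_sub_comp_eq hL hL0)
    (by exact_mod_cast LinearMap.apply_apply_eq_add_smul_of_comp_sub_comp_eq hJ hJ0)
    (LinearMap.apply_apply_eq_smul_of_commute hA hAv)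
    (LinearMap.apply_apply_eq_smul_of_commute hB hBv)
  linarith

theorem chiral_primary_iff (c : ℝ) {L J Gp Gm : ℝ → F →ₗ[ℂ] F} {A B : F →ₗ[ℂ] F} {a b : ℂ}
    (adjGm : ∀ (r : ℝ) (u v : F), ⟪u, Gm r v⟫ = ⟪Gp (-r) u, v⟫)
    (brk : ∀ r s : ℝ, Gp r ∘ₗ Gm s + Gm s ∘ₗ Gp r
        = L (r + s) + (((r - s) / 2 : ℝ) : ℂ) • J (r + s)
          + (if r + s = 0 then ((c / 6 * (r ^ 2 - 1 / 4) : ℝ) : ℂ) else 0)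
              • (LinearMap.id : F →ₗ[ℂ] F))
    (commLG : ∀ (n r : ℝ), L n ∘ₗ Gp r - Gp r ∘ₗ L n = ((n / 2 - r : ℝ) : ℂ) • Gp (r + n))
    (commLGm : ∀ (n r : ℝ), L n ∘ₗ Gm r - Gm r ∘ₗ L n = ((n / 2 - r : ℝ) : ℂ) • Gm (r + n))
    (commJG : ∀ (n r : ℝ), J n ∘ₗ Gp r - Gp r ∘ₗ J n = Gp (r + n))
    (commJGm : ∀ (n r : ℝ), J n ∘ₗ Gm r - Gm r ∘ₗ J n = -Gm (r + n))
    (commLL : ∀ n : ℝ, L 0 ∘ₗ L n - L n ∘ₗ L 0 = (-(n : ℂ)) • L n)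
    (commLJ : ∀ n : ℝ, L 0 ∘ₗ J n - J n ∘ₗ L 0 = (-(n : ℂ)) • J n)
    (commJL : ∀ n : ℝ, J 0 ∘ₗ L n = L n ∘ₗ J 0)
    (commJJ : ∀ n : ℝ, J 0 ∘ₗ J n = J n ∘ₗ J 0)
    (hAL : ∀ n, Commute A (L n)) (hAJ : ∀ n, Commute A (J n))
    (hAGp : ∀ r, Commute A (Gp r)) (hAGm : ∀ r, Commute A (Gm r))
    (hBL : ∀ n, Commute B (L n)) (hBJ : ∀ n, Commute B (J n))
    (hBGp : ∀ r, Commute B (Gp r)) (hBGm : ∀ r, Commute B (Gm r))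
    (hbound : ∀ (w : F) (h' jl' : ℝ), w ≠ 0 → L 0 w = (h' : ℂ) • w → J 0 w = (jl' : ℂ) • w →
      A w = a • w → B w = b • w → jl' / 2 ≤ h')
    {v : F} {h jl : ℝ} (hv : v ≠ 0) (hL0 : L 0 v = (h : ℂ) • v) (hJ0 : J 0 v = (jl : ℂ) • v)
    (hAv : A v = a • v) (hBv : B v = b • v) :
    ((∀ n : ℝ, 1 ≤ n → L n v = 0 ∧ J n v = 0)
      ∧ (∀ r : ℝ, 1 / 2 ≤ r → Gp r v = 0 ∧ Gm r v = 0) ∧ Gp (-(1 / 2)) v = 0)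
    ↔ h = jl / 2 := by
  have hanti := anticomm_half_apply_eq_smul c brk hL0 hJ0
  constructor
  · rintro ⟨-, hG, hGp⟩
    rw [(hG _ le_rfl).2, hGp, map_zero, map_zero, add_zero, eq_comm, smul_eq_zero,
      Complex.ofReal_eq_zero, sub_eq_zero] at hanti
    exact hanti.resolve_right hv
  · intro hh
    have lower : ∀ {X : F →ₗ[ℂ] F} {s q : ℝ}, L 0 ∘ₗ X - X ∘ₗ L 0 = (s : ℂ) • X →
        J 0 ∘ₗ X - X ∘ₗ J 0 = (q : ℂ) • X → Commute A X → Commute B X →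
        h + s < (jl + q) / 2 → X v = 0 :=
      fun hL hJ hA hB => eq_zero_of_weight_lt hbound hL hJ hA hB hL0 hJ0 hAv hBv
    obtain ⟨hGm, hGp⟩ := LinearMap.apply_eq_zero_and_apply_eq_zero_of_anticomm (adjGm (1 / 2))
      (v := v) (by rw [hanti, hh, sub_self, Complex.ofReal_zero, zero_smul])
    refine ⟨fun n hn => ⟨?_, ?_⟩, fun r hr => ⟨?_, ?_⟩, hGp⟩
    · exact lower (s := -n) (q := 0) (by rw [commLL, Complex.ofReal_neg])
        (by rw [commJL, sub_self, Complex.ofReal_zero, zero_smul]) (hAL n) (hBL n) (by linarith)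
    · exact lower (s := -n) (q := 0) (by rw [commLJ, Complex.ofReal_neg])
        (by rw [commJJ, sub_self, Complex.ofReal_zero, zero_smul]) (hAJ n) (hBJ n) (by linarith)
    · exact lower (s := -r) (q := 1) (by simpa using commLG 0 r) (by simpa using commJG 0 r)
        (hAGp r) (hBGp r) (by linarith)
    · rcases hr.eq_or_lt with rfl | hr
      · exact hGm
      exact lower (s := -r) (q := -1) (by simpa using commLGm 0 r) (by simpa using commJGm 0 r)
        (hAGm r) (hBGm r) (by linarith)

end ChiralHalf

theorem prop_NS_cc_primary_general
    {F : Type*} [NormedAddCommGroup F] [InnerProductSpace ℂ F]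
    (c cb : ℝ)
    (L Lb J Jb Gp Gm Gpb Gmb : ℝ → F →ₗ[ℂ] F)
    -- adjoint relations coming from unitarity
    (adjGm : ∀ (r : ℝ) (u v : F), ⟪u, Gm r v⟫ = ⟪Gp (-r) u, v⟫)
    (adjGmb : ∀ (r : ℝ) (u v : F), ⟪u, Gmb r v⟫ = ⟪Gpb (-r) u, v⟫)
    -- N=2 superconformal anticommutators (chiral and anti-chiral)
    (brk : ∀ r s : ℝ, Gp r ∘ₗ Gm s + Gm s ∘ₗ Gp r
        = L (r + s) + (((r - s) / 2 : ℝ) : ℂ) • J (r + s)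
          + (if r + s = 0 then ((c / 6 * (r ^ 2 - 1 / 4) : ℝ) : ℂ) else 0)
              • (LinearMap.id : F →ₗ[ℂ] F))
    (brkb : ∀ r s : ℝ, Gpb r ∘ₗ Gmb s + Gmb s ∘ₗ Gpb r
        = Lb (r + s) + (((r - s) / 2 : ℝ) : ℂ) • Jb (r + s)
          + (if r + s = 0 then ((cb / 6 * (r ^ 2 - 1 / 4) : ℝ) : ℂ) else 0)
              • (LinearMap.id : F →ₗ[ℂ] F))
    -- commutators of the Virasoro/R-symmetry modes with the supercurrents
    (commLG : ∀ (n r : ℝ), L n ∘ₗ Gp r - Gp r ∘ₗ L n = ((n / 2 - r : ℝ) : ℂ) • Gp (r + n))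
    (commLGm : ∀ (n r : ℝ), L n ∘ₗ Gm r - Gm r ∘ₗ L n = ((n / 2 - r : ℝ) : ℂ) • Gm (r + n))
    (commJG : ∀ (n r : ℝ), J n ∘ₗ Gp r - Gp r ∘ₗ J n = Gp (r + n))
    (commJGm : ∀ (n r : ℝ), J n ∘ₗ Gm r - Gm r ∘ₗ J n = -Gm (r + n))
    (commLGb : ∀ (n r : ℝ), Lb n ∘ₗ Gpb r - Gpb r ∘ₗ Lb n = ((n / 2 - r : ℝ) : ℂ) • Gpb (r + n))
    (commLGmb : ∀ (n r : ℝ), Lb n ∘ₗ Gmb r - Gmb r ∘ₗ Lb n = ((n / 2 - r : ℝ) : ℂ) • Gmb (r + n))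
    (commJGb : ∀ (n r : ℝ), Jb n ∘ₗ Gpb r - Gpb r ∘ₗ Jb n = Gpb (r + n))
    (commJGmb : ∀ (n r : ℝ), Jb n ∘ₗ Gmb r - Gmb r ∘ₗ Jb n = -Gmb (r + n))
    -- Virasoro and R-symmetry commutators with the zero modes
    (commLL : ∀ n : ℝ, L 0 ∘ₗ L n - L n ∘ₗ L 0 = (-(n : ℂ)) • L n)
    (commLJ : ∀ n : ℝ, L 0 ∘ₗ J n - J n ∘ₗ L 0 = (-(n : ℂ)) • J n)
    (commJL : ∀ n : ℝ, J 0 ∘ₗ L n = L n ∘ₗ J 0)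
    (commJJ : ∀ n : ℝ, J 0 ∘ₗ J n = J n ∘ₗ J 0)
    (commLLb : ∀ n : ℝ, Lb 0 ∘ₗ Lb n - Lb n ∘ₗ Lb 0 = (-(n : ℂ)) • Lb n)
    (commLJb : ∀ n : ℝ, Lb 0 ∘ₗ Jb n - Jb n ∘ₗ Lb 0 = (-(n : ℂ)) • Jb n)
    (commJLb : ∀ n : ℝ, Jb 0 ∘ₗ Lb n = Lb n ∘ₗ Jb 0)
    (commJJb : ∀ n : ℝ, Jb 0 ∘ₗ Jb n = Jb n ∘ₗ Jb 0)
    -- the chiral and anti-chiral halves commute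
    (cross1 : ∀ (n r : ℝ), Lb n ∘ₗ Gp r = Gp r ∘ₗ Lb n)
    (cross2 : ∀ (n r : ℝ), Jb n ∘ₗ Gp r = Gp r ∘ₗ Jb n)
    (cross3 : ∀ (n r : ℝ), Lb n ∘ₗ Gm r = Gm r ∘ₗ Lb n)
    (cross4 : ∀ (n r : ℝ), Jb n ∘ₗ Gm r = Gm r ∘ₗ Jb n)
    (cross5 : ∀ (n r : ℝ), L n ∘ₗ Gpb r = Gpb r ∘ₗ L n)
    (cross6 : ∀ (n r : ℝ), J n ∘ₗ Gpb r = Gpb r ∘ₗ J n)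
    (cross7 : ∀ (n r : ℝ), L n ∘ₗ Gmb r = Gmb r ∘ₗ L n)
    (cross8 : ∀ (n r : ℝ), J n ∘ₗ Gmb r = Gmb r ∘ₗ J n)
    (cross9 : ∀ n m : ℝ, L n ∘ₗ Lb m = Lb m ∘ₗ L n)
    (cross10 : ∀ n m : ℝ, L n ∘ₗ Jb m = Jb m ∘ₗ L n)
    (cross11 : ∀ n m : ℝ, J n ∘ₗ Lb m = Lb m ∘ₗ J n)
    (cross12 : ∀ n m : ℝ, J n ∘ₗ Jb m = Jb m ∘ₗ J n)
    -- the weight inequality for nonzero graded vectors (Lemma: h ≥ (α,J)_l/2 etc.)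
    (hineq : ∀ (w : F) (h' hb' jl' jr' : ℝ), w ≠ 0 →
        L 0 w = (h' : ℂ) • w → Lb 0 w = (hb' : ℂ) • w →
        J 0 w = (jl' : ℂ) • w → Jb 0 w = (jr' : ℂ) • w → jl' / 2 ≤ h' ∧ jr' / 2 ≤ hb')
    -- a nonzero vector `v ∈ F_{h,h̄}^α`, with `jl = (α,J)_l` and `jr = (α,J̄)_r`
    (h hb jl jr : ℝ) (v : F) (hv : v ≠ 0)
    (hL0 : L 0 v = (h : ℂ) • v) (hLb0 : Lb 0 v = (hb : ℂ) • v)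
    (hJ0 : J 0 v = (jl : ℂ) • v) (hJb0 : Jb 0 v = (jr : ℂ) • v) :
    ((∀ n : ℝ, 1 ≤ n → L n v = 0 ∧ Lb n v = 0 ∧ J n v = 0 ∧ Jb n v = 0)
      ∧ (∀ r : ℝ, (1 : ℝ) / 2 ≤ r → Gp r v = 0 ∧ Gm r v = 0 ∧ Gpb r v = 0 ∧ Gmb r v = 0)
      ∧ Gp (-(1 / 2)) v = 0 ∧ Gpb (-(1 / 2)) v = 0)
    ↔ (h = jl / 2 ∧ hb = jr / 2) := by
  have hchiral := chiral_primary_iff c adjGm brk commLG commLGm commJG commJGm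
    commLL commLJ commJL commJJ (fun n => (cross9 n 0).symm) (fun n => (cross11 n 0).symm)
    (cross1 0) (cross3 0) (fun n => (cross10 n 0).symm) (fun n => (cross12 n 0).symm)
    (cross2 0) (cross4 0) (fun w h' jl' hw e1 e2 e3 e4 => (hineq w h' hb jl' jr hw e1 e3 e2 e4).1)
    hv hL0 hJ0 hLb0 hJb0
  have hantichiral := chiral_primary_iff cb adjGmb brkb commLGb commLGmb commJGb commJGmb
    commLLb commLJb commJLb commJJb (cross9 0) (cross10 0) (cross5 0) (cross7 0)
    (cross11 0) (cross12 0) (cross6 0) (cross8 0)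
    (fun w hb' jr' hw e1 e2 e3 e4 => (hineq w h hb' jl jr' hw e3 e1 e4 e2).2)
    hv hLb0 hJb0 hL0 hJ0
  rw [← hchiral, ← hantichiral]
  simp only [imp_and, forall_and]
  tauto

/-- A nonzero `v ∈ F_{h,h̄}^α` is a chiral-chiral primary vector
(a lowest weight vector annihilated additionally by `G_{-1/2}^+` and `Ḡ_{-1/2}^+`)
if and only if `h = (α,J)_l/2` and `h̄ = (α,J̄)_r/2`. -/
theorem prop_NS_cc_primary
    {F : Type*} [NormedAddCommGroup F] [InnerProductSpace ℂ F]
    (c cb : ℝ)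
    (L Lb J Jb Gp Gm Gpb Gmb : ℝ → F →ₗ[ℂ] F)
    -- adjoint relations coming from unitarity
    (adjL : ∀ (n : ℝ) (u v : F), ⟪u, L n v⟫ = ⟪L (-n) u, v⟫)
    (adjLb : ∀ (n : ℝ) (u v : F), ⟪u, Lb n v⟫ = ⟪Lb (-n) u, v⟫)
    (adjJ : ∀ (n : ℝ) (u v : F), ⟪u, J n v⟫ = ⟪J (-n) u, v⟫)
    (adjJb : ∀ (n : ℝ) (u v : F), ⟪u, Jb n v⟫ = ⟪Jb (-n) u, v⟫)
    (adjGp : ∀ (r : ℝ) (u v : F), ⟪u, Gp r v⟫ = ⟪Gm (-r) u, v⟫)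
    (adjGm : ∀ (r : ℝ) (u v : F), ⟪u, Gm r v⟫ = ⟪Gp (-r) u, v⟫)
    (adjGpb : ∀ (r : ℝ) (u v : F), ⟪u, Gpb r v⟫ = ⟪Gmb (-r) u, v⟫)
    (adjGmb : ∀ (r : ℝ) (u v : F), ⟪u, Gmb r v⟫ = ⟪Gpb (-r) u, v⟫)
    -- N=2 superconformal anticommutators (chiral and anti-chiral)
    (brk : ∀ r s : ℝ, Gp r ∘ₗ Gm s + Gm s ∘ₗ Gp r
        = L (r + s) + (((r - s) / 2 : ℝ) : ℂ) • J (r + s)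
          + (if r + s = 0 then ((c / 6 * (r ^ 2 - 1 / 4) : ℝ) : ℂ) else 0)
              • (LinearMap.id : F →ₗ[ℂ] F))
    (brkb : ∀ r s : ℝ, Gpb r ∘ₗ Gmb s + Gmb s ∘ₗ Gpb r
        = Lb (r + s) + (((r - s) / 2 : ℝ) : ℂ) • Jb (r + s)
          + (if r + s = 0 then ((cb / 6 * (r ^ 2 - 1 / 4) : ℝ) : ℂ) else 0)
              • (LinearMap.id : F →ₗ[ℂ] F))
    (brkGpGp : ∀ r s : ℝ, Gp r ∘ₗ Gp s + Gp s ∘ₗ Gp r = 0)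
    (brkGmGm : ∀ r s : ℝ, Gm r ∘ₗ Gm s + Gm s ∘ₗ Gm r = 0)
    (brkGpGpb : ∀ r s : ℝ, Gpb r ∘ₗ Gpb s + Gpb s ∘ₗ Gpb r = 0)
    (brkGmGmb : ∀ r s : ℝ, Gmb r ∘ₗ Gmb s + Gmb s ∘ₗ Gmb r = 0)
    -- commutators of the Virasoro/R-symmetry modes with the supercurrents
    (commLG : ∀ (n r : ℝ), L n ∘ₗ Gp r - Gp r ∘ₗ L n = ((n / 2 - r : ℝ) : ℂ) • Gp (r + n))
    (commLGm : ∀ (n r : ℝ), L n ∘ₗ Gm r - Gm r ∘ₗ L n = ((n / 2 - r : ℝ) : ℂ) • Gm (r + n))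
    (commJG : ∀ (n r : ℝ), J n ∘ₗ Gp r - Gp r ∘ₗ J n = Gp (r + n))
    (commJGm : ∀ (n r : ℝ), J n ∘ₗ Gm r - Gm r ∘ₗ J n = -Gm (r + n))
    (commLGb : ∀ (n r : ℝ), Lb n ∘ₗ Gpb r - Gpb r ∘ₗ Lb n = ((n / 2 - r : ℝ) : ℂ) • Gpb (r + n))
    (commLGmb : ∀ (n r : ℝ), Lb n ∘ₗ Gmb r - Gmb r ∘ₗ Lb n = ((n / 2 - r : ℝ) : ℂ) • Gmb (r + n))
    (commJGb : ∀ (n r : ℝ), Jb n ∘ₗ Gpb r - Gpb r ∘ₗ Jb n = Gpb (r + n))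
    (commJGmb : ∀ (n r : ℝ), Jb n ∘ₗ Gmb r - Gmb r ∘ₗ Jb n = -Gmb (r + n))
    -- Virasoro and R-symmetry commutators with the zero modes
    (commLL : ∀ n : ℝ, L 0 ∘ₗ L n - L n ∘ₗ L 0 = (-(n : ℂ)) • L n)
    (commLJ : ∀ n : ℝ, L 0 ∘ₗ J n - J n ∘ₗ L 0 = (-(n : ℂ)) • J n)
    (commJL : ∀ n : ℝ, J 0 ∘ₗ L n = L n ∘ₗ J 0)
    (commJJ : ∀ n : ℝ, J 0 ∘ₗ J n = J n ∘ₗ J 0)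
    (commLLb : ∀ n : ℝ, Lb 0 ∘ₗ Lb n - Lb n ∘ₗ Lb 0 = (-(n : ℂ)) • Lb n)
    (commLJb : ∀ n : ℝ, Lb 0 ∘ₗ Jb n - Jb n ∘ₗ Lb 0 = (-(n : ℂ)) • Jb n)
    (commJLb : ∀ n : ℝ, Jb 0 ∘ₗ Lb n = Lb n ∘ₗ Jb 0)
    (commJJb : ∀ n : ℝ, Jb 0 ∘ₗ Jb n = Jb n ∘ₗ Jb 0)
    -- the chiral and anti-chiral halves commute
    (cross1 : ∀ (n r : ℝ), Lb n ∘ₗ Gp r = Gp r ∘ₗ Lb n)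
    (cross2 : ∀ (n r : ℝ), Jb n ∘ₗ Gp r = Gp r ∘ₗ Jb n)
    (cross3 : ∀ (n r : ℝ), Lb n ∘ₗ Gm r = Gm r ∘ₗ Lb n)
    (cross4 : ∀ (n r : ℝ), Jb n ∘ₗ Gm r = Gm r ∘ₗ Jb n)
    (cross5 : ∀ (n r : ℝ), L n ∘ₗ Gpb r = Gpb r ∘ₗ L n)
    (cross6 : ∀ (n r : ℝ), J n ∘ₗ Gpb r = Gpb r ∘ₗ J n)
    (cross7 : ∀ (n r : ℝ), L n ∘ₗ Gmb r = Gmb r ∘ₗ L n)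
    (cross8 : ∀ (n r : ℝ), J n ∘ₗ Gmb r = Gmb r ∘ₗ J n)
    (cross9 : ∀ n m : ℝ, L n ∘ₗ Lb m = Lb m ∘ₗ L n)
    (cross10 : ∀ n m : ℝ, L n ∘ₗ Jb m = Jb m ∘ₗ L n)
    (cross11 : ∀ n m : ℝ, J n ∘ₗ Lb m = Lb m ∘ₗ J n)
    (cross12 : ∀ n m : ℝ, J n ∘ₗ Jb m = Jb m ∘ₗ J n)
    -- the supercurrent modes are supported on half-integers
    (hhalf : ∀ r : ℝ, (¬ ∃ k : ℤ, r = (k : ℝ) + 1 / 2) →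
        Gp r = 0 ∧ Gm r = 0 ∧ Gpb r = 0 ∧ Gmb r = 0)
    -- conformal weights are bounded below (FO3)
    (N : ℝ)
    (hbound : ∀ (w : F) (h hb jl jr : ℝ), w ≠ 0 →
        L 0 w = (h : ℂ) • w → Lb 0 w = (hb : ℂ) • w →
        J 0 w = (jl : ℂ) • w → Jb 0 w = (jr : ℂ) • w → N ≤ h ∧ N ≤ hb)
    -- the weight inequality for nonzero graded vectors (Lemma: h ≥ (α,J)_l/2 etc.)
    (hineq : ∀ (w : F) (h' hb' jl' jr' : ℝ), w ≠ 0 →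
        L 0 w = (h' : ℂ) • w → Lb 0 w = (hb' : ℂ) • w →
        J 0 w = (jl' : ℂ) • w → Jb 0 w = (jr' : ℂ) • w → jl' / 2 ≤ h' ∧ jr' / 2 ≤ hb')
    -- a nonzero vector `v ∈ F_{h,h̄}^α`, with `jl = (α,J)_l` and `jr = (α,J̄)_r`
    (h hb jl jr : ℝ) (v : F) (hv : v ≠ 0)
    (hL0 : L 0 v = (h : ℂ) • v) (hLb0 : Lb 0 v = (hb : ℂ) • v)
    (hJ0 : J 0 v = (jl : ℂ) • v) (hJb0 : Jb 0 v = (jr : ℂ) • v) :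
    ((∀ n : ℝ, 1 ≤ n → L n v = 0 ∧ Lb n v = 0 ∧ J n v = 0 ∧ Jb n v = 0)
      ∧ (∀ r : ℝ, (1 : ℝ) / 2 ≤ r → Gp r v = 0 ∧ Gm r v = 0 ∧ Gpb r v = 0 ∧ Gmb r v = 0)
      ∧ Gp (-(1 / 2)) v = 0 ∧ Gpb (-(1 / 2)) v = 0)
    ↔ (h = jl / 2 ∧ hb = jr / 2) :=
  prop_NS_cc_primary_general c cb L Lb J Jb Gp Gm Gpb Gmb adjGm adjGmb brk brkb commLG commLGm
    commJG commJGm commLGb commLGmb commJGb commJGmb commLL commLJ commJL commJJ commLLb commLJb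
    commJLb commJJb cross1 cross2 cross3 cross4 cross5 cross6 cross7 cross8 cross9 cross10 cross11
    cross12 hineq h hb jl jr v hv hL0 hLb0 hJ0 hJb0
end

section
/- Let Ω be a generalized full vertex superalgebra with charge space (H, (−,−)_c), and let e_γ ∈ Ω^γ satisfy L_Ω(−1)e_γ = L̄_Ω(−1)e_γ = 0. If a ∈ Ω^α satisfies e_γ(−1,−1)a ≠ 0, then (α,γ)_c ∈ ℤ and Ŷ(a,z)e_γ = (−1)^{|a||e_γ|+(α,γ)_c} exp(L_Ω(−1)z + L̄_Ω(−1)z̄)(e_γ·a). -/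
/-!
Statement 10: In a generalized full vertex superalgebra `Ω` with charge bilinear form
`(−,−)_c`, let `e_γ ∈ Ω^γ` be translation invariant (`L_Ω(−1)e_γ = L̄_Ω(−1)e_γ = 0`),
so that `Ŷ(e_γ,z) = e_γ(−1,−1)` is the constant left multiplication.  If `a ∈ Ω^α`
satisfies `e_γ(−1,−1)a ≠ 0`, then `(α,γ)_c ∈ ℤ` and
`Ŷ(a,z)e_γ = (−1)^{|a||e_γ|+(α,γ)_c} · exp(L_Ω(−1)z + L̄_Ω(−1)z̄)(e_γ·a)`.

Formal series `Σ c_{u,v} z^u z̄^v` are encoded as coefficient functions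
`ℝ → ℝ → Ω`, `(u,v) ↦ c_{u,v}`; the mode expansion convention is
`Ŷ(a,z)b = Σ_{r,s} a(r,s)b · z^{−r−1} z̄^{−s−1}`.
-/

noncomputable section

variable {Ω : Type*} [AddCommGroup Ω] [Module ℂ Ω]

open Classical in
/-- `(−1)^x` for `x ∈ ℤ ⊂ ℝ` (and junk value `1` otherwise). -/
noncomputable def negOnePowR (x : ℝ) : ℂ :=
  if h : ∃ n : ℤ, x = (n : ℝ) then (-1 : ℂ) ^ h.choose else 1

/-- The series with a single term `x · z^r z̄^s`. -/
def fsingle (r s : ℝ) (x : Ω) : ℝ → ℝ → Ω := fun u v => if u = r ∧ v = s then x else 0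

/-- Multiplication of a series by `z^c`. -/
def shiftF (c : ℝ) (G : ℝ → ℝ → Ω) : ℝ → ℝ → Ω := fun u v => G (u - c) v

/-- The formal limit `z → −z` on a series whose exponent differences are integers:
each coefficient at `(u,v)` gets multiplied by `(−1)^{u−v}`. -/
noncomputable def flipF (G : ℝ → ℝ → Ω) : ℝ → ℝ → Ω :=
  fun u v => negOnePowR (u - v) • G u v

/-- The action of `exp(L z + L̄ z̄)` on formal series. -/
noncomputable def expT (Lm1 Lbm1 : Ω →ₗ[ℂ] Ω) (G : ℝ → ℝ → Ω) : ℝ → ℝ → Ω :=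
  fun u v => ∑ᶠ (m : ℕ) (k : ℕ),
    (((m.factorial * k.factorial : ℕ) : ℂ))⁻¹ •
      ((Lm1 ^ m) ((Lbm1 ^ k) (G (u - (m : ℝ)) (v - (k : ℝ)))))

/-!
Since `Ŷ(e_γ,z)` is the constant `e_γ·`, skew-symmetry says that `z^{(α,γ)_c}Ŷ(a,z)e_γ` is
`± (−1)^{(α,γ)_c} exp(L(−1)z + L̄(−1)z̄)` applied to the single term `z^{(α,γ)_c}(e_γ·a)`.
Its coefficient at `z^{(α,γ)_c} z̄^0` is then a nonzero multiple of `e_γ·a ≠ 0`, so integrality of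
the exponent differences forces `(α,γ)_c ∈ ℤ`; dividing by `z^{(α,γ)_c}` gives the formula.
-/

lemma negOnePowR_ne_zero (x : ℝ) : negOnePowR x ≠ 0 := by
  unfold negOnePowR
  split
  · exact zpow_ne_zero _ (by norm_num)
  · exact one_ne_zero

lemma fsingle_smul (r s : ℝ) (c : ℂ) (x : Ω) : fsingle r s (c • x) = c • fsingle r s x := by
  funext u v
  simp only [fsingle, Pi.smul_apply]
  split_ifs <;> simp

lemma shiftF_fsingle {M : Type*} [AddCommGroup M] (c r s : ℝ) (x : M) :
    shiftF c (fsingle r s x) = fsingle (r + c) s x := by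
  funext u v
  simp only [shiftF, fsingle, sub_eq_iff_eq_add]

lemma flipF_fsingle (r s : ℝ) (x : Ω) :
    flipF (fsingle r s x) = fsingle r s (negOnePowR (r - s) • x) := by
  funext u v
  simp only [flipF, fsingle]
  split_ifs with h
  · rw [h.1, h.2]
  · exact smul_zero _

section expT

variable (L Lb : Ω →ₗ[ℂ] Ω)

lemma expT_shiftF (c : ℝ) (G : ℝ → ℝ → Ω) :
    expT L Lb (shiftF c G) = shiftF c (expT L Lb G) := by
  funext u v
  refine finsum_congr fun m => finsum_congr fun k => ?_
  simp only [shiftF, sub_right_comm]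

lemma expT_smul (c : ℂ) (G : ℝ → ℝ → Ω) : expT L Lb (c • G) = c • expT L Lb G := by
  funext u v
  simp only [expT, Pi.smul_apply, smul_finsum, map_smul, smul_comm c]

/-- Only the `m = k = 0` term of the exponential reaches the exponent of a single term. -/
lemma expT_fsingle_self (r s : ℝ) (x : Ω) : expT L Lb (fsingle r s x) r s = x := by
  have hsub (t : ℝ) (n : ℕ) : t - n = t ↔ n = 0 := by simp
  unfold expT
  rw [finsum_eq_single _ 0 fun m hm => ?_]
  · rw [finsum_eq_single _ 0 fun k hk => ?_]
    · simp [fsingle]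
    · simp [fsingle, hsub, hk]
  · exact finsum_eq_zero_of_forall_eq_zero fun k => by simp [fsingle, hsub, hm]

end expT

/-- Here `Yae r s = a(r,s)e_γ`, `Yea r s = e_γ(r,s)a`, `aγc = (α,γ)_c`, and `pa, pγ` are the
parities of `a` and `e_γ`. -/
theorem lem_vacuum_like_general
    (Lm1 Lbm1 : Ω →ₗ[ℂ] Ω)
    (aγc : ℝ) (pa pγ : ℤ)
    (Yae Yea : ℝ → ℝ → Ω)
    (hsupp : ∀ u v : ℝ, shiftF aγc (fun u v => Yae (-u - 1) (-v - 1)) u v ≠ 0 →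
        ∃ n : ℤ, u - v = (n : ℝ))
    (hskew : ∀ u v : ℝ, shiftF aγc (fun u v => Yae (-u - 1) (-v - 1)) u v
        = ((-1 : ℂ) ^ (pa * pγ)) •
            expT Lm1 Lbm1 (flipF (shiftF aγc (fsingle 0 0 (Yea (-1) (-1))))) u v)
    (hne : Yea (-1) (-1) ≠ 0) :
    (∃ n : ℤ, aγc = (n : ℝ))
    ∧ ∀ u v : ℝ, Yae (-u - 1) (-v - 1)
        = (((-1 : ℂ) ^ (pa * pγ)) * negOnePowR aγc) •
            expT Lm1 Lbm1 (fsingle 0 0 (Yea (-1) (-1))) u v := by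
  set x := Yea (-1) (-1)
  set ε := (-1 : ℂ) ^ (pa * pγ) * negOnePowR aγc
  have hskew' : shiftF aγc (fun u v => Yae (-u - 1) (-v - 1))
      = ε • shiftF aγc (expT Lm1 Lbm1 (fsingle 0 0 x)) := by
    funext u v
    rw [hskew, shiftF_fsingle, flipF_fsingle, ← shiftF_fsingle, fsingle_smul, expT_shiftF,
      expT_smul]
    simp only [shiftF, Pi.smul_apply, smul_smul, zero_add, sub_zero, ε]
  have hε : ε ≠ 0 := mul_ne_zero (zpow_ne_zero _ (by norm_num)) (negOnePowR_ne_zero _)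
  obtain ⟨n, hn⟩ := hsupp aγc 0 <| by
    rw [hskew', Pi.smul_apply, Pi.smul_apply, shiftF, sub_self, expT_fsingle_self]
    exact smul_ne_zero hε hne
  refine ⟨⟨n, by simpa using hn⟩, fun u v => ?_⟩
  simpa [shiftF] using congrFun (congrFun hskew' (u + aγc)) v

/-- Here `Yae r s = a(r,s)e_γ`, `Yea r s = e_γ(r,s)a`,
`aγc = (α,γ)_c`, and `pa, pγ` are the parities of `a` and `e_γ`.
Assuming that `Ŷ(e_γ,z)` is the constant `e_γ(−1,−1)` (translation invariance of
`e_γ`), that `z^{(α,γ)_c}Ŷ(a,z)e_γ` has integer exponent differences (membership in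
`Ω((z,z̄,|z|^ℝ))`), and the skew-symmetry
`z^{(α,γ)_c}Ŷ(a,z)e_γ = (−1)^{|a||e_γ|} exp(L(−1)z+L̄(−1)z̄) lim_{z→−z} z^{(α,γ)_c}Ŷ(e_γ,z)a`,
if `e_γ(−1,−1)a ≠ 0` then `(α,γ)_c ∈ ℤ` and
`Ŷ(a,z)e_γ = (−1)^{|a||e_γ|+(α,γ)_c} exp(L(−1)z+L̄(−1)z̄)(e_γ·a)`. -/
theorem lem_vacuum_like
    (Lm1 Lbm1 : Ω →ₗ[ℂ] Ω)
    (a eγ : Ω) (aγc : ℝ) (pa pγ : ℤ)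
    (Yae Yea : ℝ → ℝ → Ω)
    (hLeγ : Lm1 eγ = 0) (hLbeγ : Lbm1 eγ = 0)
    (hconst : ∀ r s : ℝ, Yea r s = if r = -1 ∧ s = -1 then Yea (-1) (-1) else 0)
    (hsupp : ∀ u v : ℝ, shiftF aγc (fun u v => Yae (-u - 1) (-v - 1)) u v ≠ 0 →
        ∃ n : ℤ, u - v = (n : ℝ))
    (hskew : ∀ u v : ℝ, shiftF aγc (fun u v => Yae (-u - 1) (-v - 1)) u v
        = ((-1 : ℂ) ^ (pa * pγ)) •
            expT Lm1 Lbm1 (flipF (shiftF aγc (fsingle 0 0 (Yea (-1) (-1))))) u v)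
    (hne : Yea (-1) (-1) ≠ 0) :
    (∃ n : ℤ, aγc = (n : ℝ))
    ∧ ∀ u v : ℝ, Yae (-u - 1) (-v - 1)
        = (((-1 : ℂ) ^ (pa * pγ)) * negOnePowR aγc) •
            expT Lm1 Lbm1 (fsingle 0 0 (Yea (-1) (-1))) u v :=
  lem_vacuum_like_general Lm1 Lbm1 aγc pa pγ Yae Yea hsupp hskew hne

end
end

section
/- Let Ω be a generalized full vertex superalgebra and e_γ ∈ Ω^γ, e_{−γ} ∈ Ω^{−γ} be elements of A_Ω = ker L_Ω(−1) ∩ ker L̄_Ω(−1) with e_γ · e_{−γ} = 1. Then (γ,γ)_c + |e_γ| is an even integer, the left multiplication by e_γ is injective on Ω, and the maps Ψ_{±γ}: Ω → Ω, a ↦ a(−1,−1)e_{±γ} are mutually inverse Ω-module isomorphisms. -/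
/-!
Skew-symmetry `e_γ·e_{−γ} = ε e_{−γ}·e_γ` with `e_γ·e_{−γ} = 𝟙` makes `e_{−γ}·e_γ` a multiple
of `𝟙`; associativity then gives `ε e_γ = e_γ`, hence `ε 𝟙 = 𝟙` and `ε = 1`. So `e_{−γ}` is a
two-sided inverse of `e_γ`, which inverts left multiplication by `e_γ` and right multiplication
by `e_{±γ}`, while `ε = (−1)^{|e_γ|² + (γ,γ)_c} = 1` is the parity statement.
-/

noncomputable section

def LinearMap.ofMapSMulAdd {R M N : Type*} [Semiring R] [AddCommMonoid M] [Module R M]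
    [AddCommGroup N] [Module R N] (f : M → N)
    (hf : ∀ (c : R) (x y : M), f (c • x + y) = c • f x + f y) : M →ₗ[R] N where
  toFun := f
  map_add' x y := by simpa using hf 1 x y
  map_smul' c x := by
    have hzero : f 0 = 0 := by simpa using hf 1 0 0
    simpa [hzero] using hf c x 0

theorem negOnePowR_intCast (n : ℤ) : negOnePowR n = (-1 : ℂ) ^ n := by
  have hint : ∃ m : ℤ, (n : ℝ) = m := ⟨n, rfl⟩
  rw [negOnePowR, dif_pos hint, ← Int.cast_inj.mp hint.choose_spec]

theorem Int.even_add_of_neg_one_zpow_mul_self_mul_eq_one {K : Type*} [DivisionRing K]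
    [CharZero K] {p n : ℤ} (h : (-1 : K) ^ (p * p) * (-1 : K) ^ n = 1) : Even (p + n) := by
  rw [← zpow_add₀ (neg_ne_zero.mpr one_ne_zero)] at h
  have heven : Even (p * p + n) := by
    by_contra hodd
    rw [(Int.not_even_iff_odd.mp hodd).neg_one_zpow] at h
    norm_num at h
  simpa [Int.even_add, Int.even_mul] using heven

section UnitalProduct

variable {R M : Type*} [CommRing R] [AddCommGroup M] [Module R M]
  (μ : M →ₗ[R] M →ₗ[R] M) {one e f : M}

theorem leftInverse_of_mul_eq_one (hfe : μ f e = one) (hone : ∀ a, μ one a = a)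
    (hassoc : ∀ a, μ f (μ e a) = μ (μ f e) a) : Function.LeftInverse (μ f) (μ e) := fun a => by
  rw [hassoc, hfe, hone]

theorem eq_one_of_mul_eq_one_of_mul_eq_smul_mul [IsDomain R] [Module.IsTorsionFree R M]
    {ε : R} (hone_ne : one ≠ 0) (hone_mul : μ one e = e) (hmul_one : μ e one = e)
    (hef : μ e f = one) (hskew : μ e f = ε • μ f e)
    (hassoc : μ e (μ f e) = μ (μ e f) e) : ε = 1 := by
  have hεe : ε • e = e := by
    calc ε • e = μ e (ε • μ f e) := by rw [map_smul, hassoc, hef, hone_mul]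
      _ = e := by rw [← hskew, hef, hmul_one]
  rw [← smul_left_inj hone_ne, one_smul]
  calc ε • one = μ (ε • e) f := by rw [map_smul, LinearMap.smul_apply, hef]
    _ = one := by rw [hεe, hef]

end UnitalProduct

/-- The modes are encoded by `M a r s b = a(r,s)b`, so `a · b = M a (-1) (-1) b`; moreover
`γγc = (γ,γ)_c` and `pγ = |e_γ| = |e_{−γ}|`. -/
theorem prop_app_invertible_general
    {Ω : Type*} [AddCommGroup Ω] [Module ℂ Ω]
    (M : Ω → ℝ → ℝ → Ω →ₗ[ℂ] Ω)
    (hlinM : ∀ (C : ℂ) (x y : Ω) (r s : ℝ), M (C • x + y) r s = C • M x r s + M y r s)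
    (one eγ emγ : Ω) (γγc : ℝ) (pγ : ℤ)
    (honez : one ≠ 0)
    (hone : ∀ a : Ω, M one (-1) (-1) a = a)
    (honeR : ∀ a : Ω, M a (-1) (-1) one = a)
    (hmul : M eγ (-1) (-1) emγ = one)
    (hγint : ∃ n : ℤ, γγc = (n : ℝ))
    (hskew : M eγ (-1) (-1) emγ
        = (((-1 : ℂ) ^ (pγ * pγ)) * negOnePowR γγc) • M emγ (-1) (-1) eγ)
    (hassoc : ∀ a : Ω, M emγ (-1) (-1) (M eγ (-1) (-1) a)
        = M (M emγ (-1) (-1) eγ) (-1) (-1) a)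
    (hmodγ : ∀ (a b : Ω) (r s : ℝ),
        M a r s (M b (-1) (-1) eγ) = M (M a r s b) (-1) (-1) eγ)
    (hmodmγ : ∀ (a b : Ω) (r s : ℝ),
        M a r s (M b (-1) (-1) emγ) = M (M a r s b) (-1) (-1) emγ) :
    (∃ k : ℤ, γγc + (pγ : ℝ) = 2 * (k : ℝ))
    ∧ (∀ a : Ω, M eγ (-1) (-1) a = 0 → a = 0)
    ∧ (∀ a : Ω, M (M a (-1) (-1) emγ) (-1) (-1) eγ = a)
    ∧ (∀ a : Ω, M (M a (-1) (-1) eγ) (-1) (-1) emγ = a) := by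
  let μ : Ω →ₗ[ℂ] Ω →ₗ[ℂ] Ω :=
    LinearMap.ofMapSMulAdd (fun a => M a (-1) (-1)) fun C x y => hlinM C x y (-1) (-1)
  obtain ⟨n, rfl⟩ := hγint
  rw [negOnePowR_intCast] at hskew
  have hsign : (-1 : ℂ) ^ (pγ * pγ) * (-1 : ℂ) ^ n = 1 :=
    eq_one_of_mul_eq_one_of_mul_eq_smul_mul μ honez (hone eγ) (honeR eγ) hmul hskew
      (hmodγ eγ emγ (-1) (-1))
  have hinv : M emγ (-1) (-1) eγ = one := by rwa [hsign, one_smul, hmul, eq_comm] at hskew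
  refine ⟨?_, fun a ha => ?_, ?_, ?_⟩
  · obtain ⟨k, hk⟩ := Int.even_add_of_neg_one_zpow_mul_self_mul_eq_one hsign
    exact ⟨k, by rw [add_comm]; exact_mod_cast hk.trans (two_mul k).symm⟩
  · exact (leftInverse_of_mul_eq_one μ hinv hone hassoc).injective
      (ha.trans (map_zero (μ eγ)).symm)
  · exact leftInverse_of_mul_eq_one μ.flip hinv honeR fun a => (hmodγ a emγ (-1) (-1)).symm
  · exact leftInverse_of_mul_eq_one μ.flip hmul honeR fun a => (hmodmγ a eγ (-1) (-1)).symm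

/-- Here `γγc = (γ,γ)_c` and `pγ = |e_γ|` is the common parity of
`e_γ, e_{−γ}`; the hypotheses are: linearity of the modes in the first argument, `𝟙`
is a two-sided unit for the `(−1,−1)`-product, `e_γ · e_{−γ} = 𝟙`, `(γ,γ)_c ∈ ℤ`
(from the monodromy lemma), the skew-symmetry relations
`e_γ·e_{−γ} = (−1)^{|e_γ||e_{−γ}|+(γ,γ)_c} e_{−γ}·e_γ` and
`e_γ·e_γ = (−1)^{|e_γ|+(γ,γ)_c} e_γ·e_γ`, associativity
`e_{−γ}·(e_γ·a) = (e_{−γ}·e_γ)·a`, and the module-homomorphism property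
`Ŷ(a,z)(b(−1,−1)e_{±γ}) = (Ŷ(a,z)b)(−1,−1)e_{±γ}`. -/
theorem prop_app_invertible
    {Ω : Type*} [AddCommGroup Ω] [Module ℂ Ω]
    (M : Ω → ℝ → ℝ → Ω →ₗ[ℂ] Ω)
    (hlinM : ∀ (C : ℂ) (x y : Ω) (r s : ℝ), M (C • x + y) r s = C • M x r s + M y r s)
    (one eγ emγ : Ω) (γγc : ℝ) (pγ : ℤ)
    (honez : one ≠ 0)
    (hone : ∀ a : Ω, M one (-1) (-1) a = a)
    (honeR : ∀ a : Ω, M a (-1) (-1) one = a)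
    (hmul : M eγ (-1) (-1) emγ = one)
    (hγint : ∃ n : ℤ, γγc = (n : ℝ))
    (hskew : M eγ (-1) (-1) emγ
        = (((-1 : ℂ) ^ (pγ * pγ)) * negOnePowR γγc) • M emγ (-1) (-1) eγ)
    (hskew2 : M eγ (-1) (-1) eγ
        = (((-1 : ℂ) ^ (pγ * pγ)) * negOnePowR γγc) • M eγ (-1) (-1) eγ)
    (hassoc : ∀ a : Ω, M emγ (-1) (-1) (M eγ (-1) (-1) a)
        = M (M emγ (-1) (-1) eγ) (-1) (-1) a)
    (hmodγ : ∀ (a b : Ω) (r s : ℝ),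
        M a r s (M b (-1) (-1) eγ) = M (M a r s b) (-1) (-1) eγ)
    (hmodmγ : ∀ (a b : Ω) (r s : ℝ),
        M a r s (M b (-1) (-1) emγ) = M (M a r s b) (-1) (-1) emγ) :
    (∃ k : ℤ, γγc + (pγ : ℝ) = 2 * (k : ℝ))
    ∧ (∀ a : Ω, M eγ (-1) (-1) a = 0 → a = 0)
    ∧ (∀ a : Ω, M (M a (-1) (-1) emγ) (-1) (-1) eγ = a)
    ∧ (∀ a : Ω, M (M a (-1) (-1) eγ) (-1) (-1) emγ = a) :=
  prop_app_invertible_general M hlinM one eγ emγ γγc pγ honez hone honeR hmul hγint hskew hassoc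
    hmodγ hmodmγ
end
end
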